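/- Let |λ,s⟩ be a charged ℓ-partition and let X be its first good vertical e-strip (the maximal admissible vertical e-strip in W(λ,s) with respect to the lexicographic order induced by the order > on boxes). Then X is addable, i.e. λ ⊔ X is again an ℓ-partition. -/

import Mathlib

open scoped Classical

/-- A box `(a, b, j)`: row `a`, column `b` (both 0-indexed), component `j` (0-indexed,
so `j < ℓ`). -/
abbrev Box := ℕ × ℕ × ℕ

/-- The content of a box: `c(a,b,j) = b - a + s_j`. -/
def content (s : ℕ → ℤ) (γ : Box) : ℤ := (γ.2.1 : ℤ) - (γ.1 : ℤ) + s γ.2.2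

/-- An `ℓ`-partition: a family of `ℓ` weakly decreasing eventually-zero sequences,
`lam j a` being the length of row `a` of component `j`. -/
def IsMultipartition (ℓ : ℕ) (lam : ℕ → ℕ → ℕ) : Prop :=
  ∀ j < ℓ, (∀ a, lam j (a + 1) ≤ lam j a) ∧ ∃ N, ∀ a ≥ N, lam j a = 0

/-- `W(λ,s)`: the boxes directly to the right of `λ` (the first box absent from each row
of each component, including column-one boxes of empty rows). -/
def InW (ℓ : ℕ) (lam : ℕ → ℕ → ℕ) (γ : Box) : Prop :=
  γ.2.2 < ℓ ∧ γ.2.1 = lam γ.2.2 γ.1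

/-- An admissible vertical `e`-strip: a sequence of `e` boxes with no horizontal domino,
consecutive decreasing contents, and weakly decreasing component indices. -/
def IsAdmissible (e : ℕ) (s : ℕ → ℤ) (X : Fin e → Box) : Prop :=
  (∀ (i : ℕ) (h : i + 1 < e),
      ¬((X ⟨i + 1, h⟩).1 = (X ⟨i, Nat.lt_of_succ_lt h⟩).1 ∧
        (X ⟨i + 1, h⟩).2.2 = (X ⟨i, Nat.lt_of_succ_lt h⟩).2.2)) ∧
  (∀ (i : ℕ) (h : i + 1 < e),
      content s (X ⟨i, Nat.lt_of_succ_lt h⟩) = content s (X ⟨i + 1, h⟩) + 1) ∧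
  (∀ i i' : Fin e, i < i' → (X i').2.2 ≤ (X i).2.2)

/-- An admissible vertical `e`-strip of the charged `ℓ`-partition `|λ,s⟩`. -/
def IsStrip (e ℓ : ℕ) (lam : ℕ → ℕ → ℕ) (s : ℕ → ℤ) (X : Fin e → Box) : Prop :=
  IsAdmissible e s X ∧ ∀ i, InW ℓ lam (X i)

/-- The order on boxes: `γ > γ'` iff `c(γ) > c(γ')`, or `c(γ) = c(γ')` and `j < j'`. -/
def boxGT (s : ℕ → ℤ) (γ γ' : Box) : Prop :=
  content s γ' < content s γ ∨ (content s γ' = content s γ ∧ γ.2.2 < γ'.2.2)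

/-- The induced lexicographic order on `e`-tuples of boxes. -/
def lexGT (e : ℕ) (s : ℕ → ℤ) (X Y : Fin e → Box) : Prop :=
  ∃ i : Fin e, (∀ i' : Fin e, i' < i → X i' = Y i') ∧ boxGT s (X i) (Y i)

/-- The result of adding the strip `X` to `λ`: each row meeting a box of `X` at its right
end grows by one. -/
noncomputable def addStrip (lam : ℕ → ℕ → ℕ) {e : ℕ} (X : Fin e → Box) : ℕ → ℕ → ℕ :=
  fun j a => lam j a + (if ∃ i, X i = (a, lam j a, j) then 1 else 0)

/-- The strip `X` is addable to `λ`: its boxes are distinct, disjoint from `λ` (automatic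
for boxes of `W(λ,s)`), and adding them yields again an `ℓ`-partition. -/
def IsAddable (e ℓ : ℕ) (lam : ℕ → ℕ → ℕ) (X : Fin e → Box) : Prop :=
  (∀ i i' : Fin e, i ≠ i' → X i ≠ X i') ∧ IsMultipartition ℓ (addStrip lam X)

/-- `X` is the first good vertical `e`-strip of `|λ,s⟩`: the greatest admissible vertical
`e`-strip of `|λ,s⟩` for the lexicographic order. -/
def IsFirstGood (e ℓ : ℕ) (lam : ℕ → ℕ → ℕ) (s : ℕ → ℤ) (X : Fin e → Box) : Prop :=
  IsStrip e ℓ lam s X ∧ ∀ Y, IsStrip e ℓ lam s Y → Y ≠ X → lexGT e s X Y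

/-!
If `λ ⊔ X` fails to be an `ℓ`-partition, then `X` contains a box `(a+1, b, j)` of `W(λ,s)`
whose upper neighbour `δ = (a, b, j)` lies in `W(λ,s)` but not in `X`. The box `δ` has content
one more than `(a+1, b, j)`, so it can be prepended to `X` if `(a+1, b, j)` comes first, and
otherwise it can replace its predecessor in `X`, which has the same content as `δ` and a larger
component (in one component, boxes of `W(λ,s)` are determined by their content). Either way
this produces a larger admissible strip.
-/

/-- `γ'` may directly follow `γ` in an admissible vertical strip. -/
def IsStripStep (s : ℕ → ℤ) (γ γ' : Box) : Prop :=
  ¬(γ'.1 = γ.1 ∧ γ'.2.2 = γ.2.2) ∧ content s γ = content s γ' + 1 ∧ γ'.2.2 ≤ γ.2.2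

section Strips

variable {e : ℕ} {s : ℕ → ℤ} {X : Fin e → Box}

theorem isAdmissible_iff_isStripStep :
    IsAdmissible e s X ↔
      ∀ (i : ℕ) (h : i + 1 < e), IsStripStep s (X ⟨i, by omega⟩) (X ⟨i + 1, h⟩) := by
  refine ⟨fun ⟨hdom, hc, hcomp⟩ i h => ⟨hdom i h, hc i h, hcomp _ _ (Nat.lt_succ_self i)⟩,
    fun hstep => ⟨fun i h => (hstep i h).1, fun i h => (hstep i h).2.1, ?_⟩⟩
  suffices Antitone fun i => (X i).2.2 from fun i i' h => this h.le
  cases e with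
  | zero => exact fun i => i.elim0
  | succ n => exact Fin.antitone_iff_succ_le.2 fun i => (hstep i (by omega)).2.2

theorem IsAdmissible.content_add_val (hX : IsAdmissible e s X) (i : Fin e) :
    content s (X i) + i = content s (X ⟨0, i.pos⟩) := by
  obtain ⟨i, hi⟩ := i
  induction i with
  | zero => simp
  | succ n ih =>
    have := hX.2.1 n hi
    have := ih (by omega)
    push_cast
    linarith

theorem IsAdmissible.injective (hX : IsAdmissible e s X) : Function.Injective X := by
  intro i i' h
  have hi := hX.content_add_val i
  have hi' := hX.content_add_val i'
  rw [h] at hi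
  exact Fin.ext (by exact_mod_cast (by linarith : (i : ℤ) = i'))

theorem IsAdmissible.cons_init {n : ℕ} {X : Fin (n + 1) → Box} {δ : Box}
    (hX : IsAdmissible (n + 1) s X) (hδ : IsStripStep s δ (X 0)) :
    IsAdmissible (n + 1) s (Fin.cons δ (Fin.init X)) := by
  rw [isAdmissible_iff_isStripStep] at hX ⊢
  intro i h
  cases i with
  | zero => exact hδ
  | succ m => exact hX m (by omega)

theorem IsAdmissible.update (hX : IsAdmissible e s X) {m : Fin e} {δ : Box}
    (hprev : ∀ i : Fin e, i.val + 1 = m → IsStripStep s (X i) δ)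
    (hnext : ∀ i : Fin e, m.val + 1 = i → IsStripStep s δ (X i)) :
    IsAdmissible e s (Function.update X m δ) := by
  rw [isAdmissible_iff_isStripStep] at hX ⊢
  intro i h
  simp only [Function.update_apply, Fin.ext_iff]
  split_ifs with h1 h2 h2
  · omega
  · exact hnext _ (by simp only [h1])
  · exact hprev _ h2
  · exact hX i h

end Strips

theorem boxGT_asymm {s : ℕ → ℤ} {γ γ' : Box} (h : boxGT s γ γ') : ¬ boxGT s γ' γ := by
  unfold boxGT at *
  omega

theorem lexGT_asymm {e : ℕ} {s : ℕ → ℤ} {X Y : Fin e → Box} (h : lexGT e s X Y) :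
    ¬ lexGT e s Y X := by
  rintro ⟨k, hk, hYX⟩
  obtain ⟨i, hi, hXY⟩ := h
  rcases lt_trichotomy i k with hik | rfl | hki
  · rw [hk i hik] at hXY
    exact boxGT_asymm hXY hXY
  · exact boxGT_asymm hXY hYX
  · rw [hi k hki] at hYX
    exact boxGT_asymm hYX hYX

theorem IsMultipartition.antitone {ℓ : ℕ} {lam : ℕ → ℕ → ℕ} (hlam : IsMultipartition ℓ lam)
    {j : ℕ} (hj : j < ℓ) : Antitone (lam j) :=
  antitone_nat_of_succ_le (hlam j hj).1

theorem InW.eq_of_content_eq {ℓ : ℕ} {lam : ℕ → ℕ → ℕ} {s : ℕ → ℤ} {γ γ' : Box}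
    (hlam : IsMultipartition ℓ lam) (hγ : InW ℓ lam γ) (hγ' : InW ℓ lam γ')
    (hj : γ.2.2 = γ'.2.2) (hc : content s γ = content s γ') : γ = γ' := by
  obtain ⟨a, b, j⟩ := γ
  obtain ⟨a', b', j'⟩ := γ'
  obtain ⟨hjℓ, hb⟩ := hγ
  obtain ⟨-, hb'⟩ := hγ'
  simp only at hjℓ hb hb' hj
  subst hj hb hb'
  simp only [content] at hc
  have hrow : a = a' := by
    rcases le_total a a' with h | h <;> have := hlam.antitone hjℓ h <;> omega
  rw [hrow]

section FirstGood

variable {e ℓ : ℕ} {lam : ℕ → ℕ → ℕ} {s : ℕ → ℤ} {X : Fin e → Box}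

theorem IsFirstGood.not_lexGT (hX : IsFirstGood e ℓ lam s X) {Y : Fin e → Box}
    (hY : IsStrip e ℓ lam s Y) : ¬ lexGT e s Y X := by
  by_cases hYX : Y = X
  · subst hYX
    exact fun h => lexGT_asymm h h
  · exact lexGT_asymm (hX.2 Y hY hYX)

theorem IsFirstGood.not_isStripStep_head {n : ℕ} {X : Fin (n + 1) → Box}
    (hX : IsFirstGood (n + 1) ℓ lam s X) {δ : Box} (hδ : InW ℓ lam δ) :
    ¬ IsStripStep s δ (X 0) := by
  intro hstep
  refine hX.not_lexGT ⟨hX.1.1.cons_init hstep, fun i => ?_⟩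
    ⟨0, fun i h => absurd h (Fin.not_lt_zero i), Or.inl ?_⟩
  · cases i using Fin.cases with
    | zero => exact hδ
    | succ i => exact hX.1.2 _
  · rw [Fin.cons_zero]
    linarith [hstep.2.1]

theorem IsFirstGood.not_boxGT_of_update (hX : IsFirstGood e ℓ lam s X) {m : Fin e} {δ : Box}
    (hδ : InW ℓ lam δ) (hY : IsAdmissible e s (Function.update X m δ)) :
    ¬ boxGT s δ (X m) := by
  intro hgt
  refine hX.not_lexGT ⟨hY, fun i => ?_⟩
    ⟨m, fun i hi => Function.update_of_ne hi.ne _ _, by rwa [Function.update_self]⟩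
  rcases eq_or_ne i m with rfl | h
  · rwa [Function.update_self]
  · rw [Function.update_of_ne h]
    exact hX.1.2 i

theorem IsFirstGood.exists_eq_above (hlam : IsMultipartition ℓ lam)
    (hX : IsFirstGood e ℓ lam s X) {i : Fin e} {a j : ℕ} (hj : j < ℓ)
    (hi : X i = (a + 1, lam j a, j)) : ∃ i', X i' = (a, lam j a, j) := by
  by_contra! hno
  set δ : Box := (a, lam j a, j)
  have hδ : InW ℓ lam δ := ⟨hj, rfl⟩
  have hδi : IsStripStep s δ (X i) := by
    rw [hi]
    refine ⟨by simp [δ], ?_, le_rfl⟩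
    simp only [content, δ]
    push_cast
    ring
  obtain ⟨n, rfl⟩ : ∃ n, e = n + 1 := ⟨e - 1, by have := i.pos; omega⟩
  cases i using Fin.cases with
  | zero => exact hX.not_isStripStep_head hδ hδi
  | succ k =>
    have hstep : IsStripStep s (X k.castSucc) (X k.succ) :=
      isAdmissible_iff_isStripStep.1 hX.1.1 k (by omega)
    have hc : content s (X k.castSucc) = content s δ := by linarith [hstep.2.1, hδi.2.1]
    have hjk : j ≤ (X k.castSucc).2.2 := by simpa [hi] using hstep.2.2
    rcases hjk.lt_or_eq with hlt | heq
    · refine hX.not_boxGT_of_update hδ (hX.1.1.update (fun i' hi' => ?_) fun i' hi' => ?_)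
        (Or.inr ⟨hc, hlt⟩)
      · have hprev : IsStripStep s (X i') (X k.castSucc) := by
          have := isAdmissible_iff_isStripStep.1 hX.1.1 i' (by omega)
          rwa [show (⟨i' + 1, _⟩ : Fin (n + 1)) = k.castSucc from Fin.ext hi'] at this
        refine ⟨fun hdom => ?_, by rw [hprev.2.1, hc], by linarith [hprev.2.2]⟩
        have := hprev.2.2
        simp only [δ] at hdom
        omega
      · rwa [show i' = k.succ from Fin.ext (by simp [← hi'])]
    · exact hno _ (InW.eq_of_content_eq hlam (hX.1.2 _) hδ heq.symm hc)

end FirstGood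

theorem isMultipartition_addStrip {e ℓ : ℕ} {lam : ℕ → ℕ → ℕ} {X : Fin e → Box}
    (hlam : IsMultipartition ℓ lam)
    (hclosed : ∀ j < ℓ, ∀ a i, X i = (a + 1, lam j a, j) → ∃ i', X i' = (a, lam j a, j)) :
    IsMultipartition ℓ (addStrip lam X) := by
  intro j hj
  refine ⟨fun a => ?_, ?_⟩
  · have hle := (hlam j hj).1 a
    simp only [addStrip]
    rcases hle.lt_or_eq with hlt | heq
    · split_ifs <;> omega
    · by_cases h : ∃ i, X i = (a + 1, lam j (a + 1), j)
      · obtain ⟨i, hi⟩ := h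
        rw [heq] at hi ⊢
        rw [if_pos ⟨i, hi⟩, if_pos (hclosed j hj a i hi)]
      · rw [if_neg h]
        omega
  · obtain ⟨N, hN⟩ := (hlam j hj).2
    obtain ⟨M, hM⟩ := (Set.finite_range fun i => (X i).1).bddAbove
    refine ⟨max N (M + 1), fun a ha => ?_⟩
    have hrow : ¬ ∃ i, X i = (a, lam j a, j) := by
      rintro ⟨i, hi⟩
      have := hM ⟨i, rfl⟩
      simp only [hi] at this
      omega
    simp only [addStrip]
    rw [if_neg hrow, hN a (le_of_max_le_left ha)]

theorem firstGood_isAddable_general (e ℓ : ℕ)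
    (lam : ℕ → ℕ → ℕ) (s : ℕ → ℤ) (hlam : IsMultipartition ℓ lam)
    (X : Fin e → Box) (hX : IsFirstGood e ℓ lam s X) :
    IsAddable e ℓ lam X :=
  ⟨fun _ _ h => hX.1.1.injective.ne h,
    isMultipartition_addStrip hlam fun _ hj _ _ hi => hX.exists_eq_above hlam hj hi⟩

/-- The first good vertical `e`-strip of a charged `ℓ`-partition is addable. -/
theorem firstGood_isAddable (e ℓ : ℕ) (he : 2 ≤ e) (hl : 2 ≤ ℓ)
    (lam : ℕ → ℕ → ℕ) (s : ℕ → ℤ) (hlam : IsMultipartition ℓ lam)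
    (X : Fin e → Box) (hX : IsFirstGood e ℓ lam s X) :
    IsAddable e ℓ lam X :=
  firstGood_isAddable_general e ℓ lam s hlam X hX
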